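/- Let n ≥ 3 and let p : B_n → Sym({1,…,n}) be the group homomorphism determined by p(σ_i) = the transposition (i, i+1), where permutations are composed by (fg)(x) = f(g(x)). Then for all 1 < d_1 < ⋯ < d_m < n, p(δ_{d_1,…,d_m}) is the n-cycle mapping 1 ↦ d_1 ↦ d_2 ↦ ⋯ ↦ d_m ↦ n ↦ u_k ↦ u_{k−1} ↦ ⋯ ↦ u_1 ↦ 1 (with the conventions that 1 ↦ n when m = 0, and n ↦ 1 when k = 0). -/

import Mathlib

/-- Relations for the braid group on `n` strands, with generators `σ_1, …, σ_{n-1}`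
(generators with indices outside `{1, …, n-1}` are killed). -/
def braidRels (n : ℕ) : Set (FreeGroup ℕ) :=
  { r | (∃ i : ℕ, 1 ≤ i ∧ i + 2 ≤ n ∧
          r = FreeGroup.of i * FreeGroup.of (i + 1) * FreeGroup.of i *
              (FreeGroup.of (i + 1) * FreeGroup.of i * FreeGroup.of (i + 1))⁻¹) ∨
       (∃ i j : ℕ, 1 ≤ i ∧ i + 2 ≤ j ∧ j + 1 ≤ n ∧
          r = FreeGroup.of i * FreeGroup.of j * (FreeGroup.of j * FreeGroup.of i)⁻¹) ∨
       (∃ i : ℕ, (i = 0 ∨ n ≤ i) ∧ r = FreeGroup.of i) }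

/-- The braid group `B_n` on `n` strands. -/
abbrev B (n : ℕ) : Type := PresentedGroup (braidRels n)

/-- The Artin generator `σ_i` of `B n`. -/
def σb (n i : ℕ) : B n := PresentedGroup.of i

/-- The element of `B n` represented by a word in the generators. -/
def word (n : ℕ) (l : List ℕ) : B n := (l.map (σb n)).prod

/-- The positive braid monoid `B_n^+`. -/
def Bpos (n : ℕ) : Submonoid (B n) :=
  Submonoid.closure { x | ∃ i : ℕ, 1 ≤ i ∧ i ≤ n - 1 ∧ x = σb n i }

/-- The prefix order: `a ≼ b`. -/
def bLe (n : ℕ) (a b : B n) : Prop := a⁻¹ * b ∈ Bpos n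

/-- The suffix order: `a ≽ b`. -/
def bGe (n : ℕ) (a b : B n) : Prop := a * b⁻¹ ∈ Bpos n

/-- The list `[a, a-1, …, b]` (empty if `a < b`). -/
def descList (a b : ℕ) : List ℕ := (List.range' b (a + 1 - b)).reverse

/-- The Garside element `Δ_n = σ_1 (σ_2 σ_1) ⋯ (σ_{n-1} σ_{n-2} ⋯ σ_1)`. -/
def DeltaB (n : ℕ) : B n :=
  word n (((List.range' 1 (n - 1)).map fun t => descList t 1).flatten)

/-- The element `δ = σ_1 σ_2 ⋯ σ_{n-1}`. -/
def deltaB (n : ℕ) : B n := word n (List.range' 1 (n - 1))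

/-- Simple elements: positive prefixes of `Δ_n`. -/
def isSimple (n : ℕ) (s : B n) : Prop := s ∈ Bpos n ∧ bLe n s (DeltaB n)

/-- The starting set `S(a) = {i : σ_i ≼ a}`. -/
def startSet (n : ℕ) (a : B n) : Set ℕ :=
  { i | 1 ≤ i ∧ i ≤ n - 1 ∧ bLe n (σb n i) a }

/-- The finishing set `F(a) = {i : a ≽ σ_i}`. -/
def finishSet (n : ℕ) (a : B n) : Set ℕ :=
  { i | 1 ≤ i ∧ i ≤ n - 1 ∧ bGe n a (σb n i) }

/-- The simple conjugate `δ_{d_1,…,d_m}` of `δ`, where `l = [d_1, …, d_m]`. -/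
def deltaD (n : ℕ) (l : List ℕ) : B n :=
  word n ((((1 :: l).zip (l ++ [n])).map fun p => descList (p.2 - 1) p.1).flatten)

/-- The simple element `α_{i,j}`. -/
def alphaB (n i j : ℕ) : B n :=
  if i ≤ j then word n (List.range' i (j + 1 - i)) else word n (descList i j)

/-- The conjugate `x_{η,i_1,…,i_{l+1}} = w⁻¹ η w`, `w = α_{i_1,i_2} α_{i_2,i_3} ⋯ α_{i_l,i_{l+1}}`. -/
def xbraid (n : ℕ) (η : B n) (i : ℕ → ℕ) (l : ℕ) : B n :=
  (((List.range l).map fun idx => alphaB n (i (idx + 1)) (i (idx + 2))).prod)⁻¹ * η *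
    ((List.range l).map fun idx => alphaB n (i (idx + 1)) (i (idx + 2))).prod

/-- A left-weighted sequence of proper simple factors. -/
def LWSeq (n : ℕ) (ys : List (B n)) : Prop :=
  (∀ y ∈ ys, isSimple n y ∧ y ≠ 1 ∧ y ≠ DeltaB n) ∧
  List.Chain' (fun a b => startSet n b ⊆ finishSet n a) ys


section AuxStatement4
open List Equiv

theorem formPerm_map (σ : Equiv.Perm ℕ) (l : List ℕ) :
    List.formPerm (l.map σ) = σ * l.formPerm * σ⁻¹ := by
  induction l with
  | nil => simp
  | cons x l ih =>
    match l, ih with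
    | [], _ => simp
    | y :: l, ih =>
      simp only [map_cons] at ih ⊢
      rw [formPerm_cons_cons, formPerm_cons_cons, ih, Equiv.swap_apply_apply]
      group

theorem formPerm_mul_formPerm (a : ℕ) (l1 l2 : List ℕ) (h : Nodup (a :: (l2 ++ l1))) :
    List.formPerm (a :: l1) * List.formPerm (a :: l2) = List.formPerm (a :: (l2 ++ l1)) := by
  induction l2 generalizing a with
  | nil => simp
  | cons b l2 ih =>
    have hb : Nodup (b :: (l2 ++ l1)) := by
      simp only [nodup_cons, cons_append, mem_cons, mem_append] at h ⊢
      tauto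
    have hanb : a ∉ l1 ∧ b ∉ l1 := by
      simp only [nodup_cons, cons_append, mem_cons, mem_append, nodup_append] at h
      tauto
    rw [cons_append, formPerm_cons_cons, formPerm_cons_cons, ← mul_assoc, ← ih b hb,
      ← mul_assoc]
    congr 1
    have hmap : (b :: l1).map (Equiv.swap a b) = a :: l1 := by
      simp only [map_cons, swap_apply_right]
      congr 1
      refine (List.map_congr_left (fun x hx => ?_)).trans (map_id l1)
      exact swap_apply_of_ne_of_ne (fun e => hanb.1 (e ▸ hx)) (fun e => hanb.2 (e ▸ hx))
    have h2 := formPerm_map (Equiv.swap a b) (b :: l1)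
    rw [hmap] at h2
    rw [h2]
    group

theorem descList_cons (a b : ℕ) (h : b ≤ a + 1) :
    descList (a + 1) b = (a + 1) :: descList a b := by
  unfold descList
  rw [show a + 1 + 1 - b = (a + 1 - b) + 1 by omega, List.range'_concat]
  simp
  omega

theorem descList_split (a b : ℕ) (h : b ≤ a) :
    descList a b = descList a (b + 1) ++ [b] := by
  unfold descList
  rw [show a + 1 - b = (a - b) + 1 by omega, List.range'_succ]
  simp

theorem swapProd_descList (c k : ℕ) :
    ((descList (c + k) c).map fun i => Equiv.swap i (i + 1)).prod
      = List.formPerm (descList (c + k + 1) c) := by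
  induction k with
  | zero =>
    simp only [Nat.add_zero, descList, show c + 1 + 1 - c = 2 by omega,
      show c + 1 - c = 1 by omega]
    simp [List.range', formPerm_pair]
    exact swap_comm c (c + 1)
  | succ k ih =>
    rw [show c + (k+1) = (c + k) + 1 by ring, descList_cons _ _ (by omega),
      show (c+k)+1+1 = ((c+k)+1)+1 by rfl, descList_cons ((c+k)+1) c (by omega)]
    rw [map_cons, prod_cons, ih]
    rw [show (c+k)+1 = c+k+1 by rfl, descList_cons (c+k) c (by omega), formPerm_cons_cons]
    rw [Equiv.swap_comm]

theorem nodup_tgt (n c : ℕ) (l : List ℕ) (h : Pairwise (· < ·) (c :: (l ++ [n]))) :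
    Nodup (c :: l ++ n :: ((List.range' (c+1) (n-1-c)).filter fun u => u ∉ l).reverse) := by
  rw [pairwise_cons] at h
  obtain ⟨h1, h2⟩ := h
  rw [pairwise_append] at h2
  obtain ⟨hl, -, hln⟩ := h2
  have hcl : ∀ x ∈ l, c < x := fun x hx => h1 x (mem_append.mpr (Or.inl hx))
  have hln' : ∀ x ∈ l, x < n := fun x hx => hln x hx n (mem_singleton_self n)
  have hcn : c < n := h1 n (mem_append.mpr (Or.inr (mem_singleton_self n)))
  have hF : ∀ x ∈ ((List.range' (c+1) (n-1-c)).filter fun u => u ∉ l),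
      (c + 1 ≤ x ∧ x < n) ∧ x ∉ l := by
    intro x hx
    rw [mem_filter, List.mem_range'_1] at hx
    simp only [decide_eq_true_eq] at hx
    exact ⟨⟨hx.1.1, by omega⟩, hx.2⟩
  rw [cons_append, nodup_cons, mem_append, mem_cons, mem_reverse]
  refine ⟨?_, ?_⟩
  · rintro (hc | hc | hc)
    · exact absurd (hcl c hc) (lt_irrefl c)
    · omega
    · exact absurd (hF c hc).1.1 (by omega)
  · rw [List.nodup_append]
    refine ⟨hl.nodup, ?_, ?_⟩
    · rw [nodup_cons, mem_reverse, nodup_reverse]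
      exact ⟨fun hc => absurd (hF n hc).1.2 (lt_irrefl n),
        Nodup.filter _ (List.nodup_range')⟩
    · intro x hx y hx' hxy
      subst hxy
      rw [mem_cons, mem_reverse] at hx'
      rcases hx' with h' | h'
      · exact absurd (hln' x hx) (by omega)
      · exact (hF x h').2 hx

theorem swapProd_descList' (c d : ℕ) (h : c < d) :
    ((descList (d-1) c).map fun i => Equiv.swap i (i + 1)).prod
      = List.formPerm (descList d c) := by
  have := swapProd_descList c (d-1-c)
  rw [show c + (d-1-c) = d - 1 by omega] at this
  rw [show d - 1 + 1 = d by omega] at this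
  exact this

theorem descList_cons' (d c : ℕ) (h : c ≤ d) (h1 : 1 ≤ d) :
    descList d c = d :: descList (d-1) c := by
  have := descList_cons (d-1) c (by omega)
  rwa [show (d-1)+1 = d by omega] at this

theorem main_perm (n : ℕ) (l : List ℕ) : ∀ (c : ℕ), Chain' (· < ·) (c :: (l ++ [n])) →
    (((((c :: l).zip (l ++ [n])).map fun p => descList (p.2 - 1) p.1).flatten).map
        fun i => Equiv.swap i (i+1)).prod
      = List.formPerm (c :: l ++ n ::
          ((List.range' (c+1) (n-1-c)).filter fun u => u ∉ l).reverse) := by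
  induction l with
  | nil =>
    intro c hc
    have hcn : c < n := by
      rw [nil_append] at hc
      exact (isChain_cons_cons.mp hc).1
    have hnd := nodup_tgt n c [] (isChain_iff_pairwise.mp hc)
    simp only [nil_append, zip_cons_cons, zip_nil_left, map_cons, map_nil, flatten_cons,
      flatten_nil, append_nil, not_mem_nil, not_false_eq_true, decide_true,
      filter_true] at hnd ⊢
    have h2 : (List.range' (c+1) (n-1-c)).reverse = descList (n-1) (c+1) := by
      unfold descList
      congr 2
      omega
    have h1 : descList n c = (n :: descList (n-1) (c+1)) ++ [c] := by
      rw [descList_split n c (by omega), descList_cons' n (c+1) (by omega) (by omega)]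
    rw [swapProd_descList' c n hcn, h1, h2]
    have h3 := List.formPerm_rotate_one (c :: n :: descList (n-1) (c+1))
      (by rw [h2] at hnd; simpa using hnd)
    rw [rotate_cons_succ, rotate_zero] at h3
    exact h3.trans (by simp)
  | cons d l' ih =>
    intro c hc
    have hpair := isChain_iff_pairwise.mp hc
    rw [cons_append, pairwise_cons] at hpair
    have hpair2 := hpair.2
    rw [pairwise_cons] at hpair2
    have hcd : c < d := hpair.1 d mem_cons_self
    have hdl : ∀ x ∈ l' ++ [n], d < x := hpair2.1
    have hdn : d < n := hdl n (mem_append.mpr (Or.inr (mem_singleton_self n)))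
    have hchain' : Chain' (· < ·) (d :: (l' ++ [n])) := isChain_iff_pairwise.mpr hpair.2
    -- split the filter
    have hfilter : (List.range' (c+1) (n-1-c)).filter (fun u => u ∉ (d :: l'))
        = (List.range' (c+1) (d-1-c))
          ++ (List.range' (d+1) (n-1-d)).filter (fun u => u ∉ l') := by
      have hsplit : List.range' (c+1) (n-1-c)
          = List.range' (c+1) (d-1-c) ++ List.range' d ((n-1-d)+1) := by
        have := List.range'_append (s := c+1) (m := d-1-c) (n := (n-1-d)+1) (step := 1)
        rw [show c+1+1*(d-1-c) = d by omega, show (d-1-c)+((n-1-d)+1) = n-1-c by omega] at this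
        exact this.symm
      rw [hsplit, filter_append]
      congr 1
      · rw [filter_eq_self]
        intro x hx
        rw [List.mem_range'_1] at hx
        simp only [mem_cons, decide_eq_true_eq, not_or]
        have : x < d := by omega
        exact ⟨by omega, fun hxl => absurd (hdl x (mem_append.mpr (Or.inl hxl))) (by omega)⟩
      · rw [show (n-1-d)+1 = ((n-1-d))+1 by rfl, List.range'_succ,
          filter_cons_of_neg (by simp), show d+1 = d+1 by rfl]
        apply filter_congr
        intro x hx
        rw [List.mem_range'_1] at hx
        simp only [mem_cons, decide_eq_true_eq, not_or]
        have : x ≠ d := by omega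
        exact decide_eq_decide.mpr (by tauto)
    have hrev : ((List.range' (c+1) (n-1-c)).filter (fun u => u ∉ (d :: l'))).reverse
        = ((List.range' (d+1) (n-1-d)).filter (fun u => u ∉ l')).reverse
          ++ descList (d-1) (c+1) := by
      rw [hfilter, reverse_append]
      congr 1
      unfold descList
      congr 2
      omega
    have hndT := nodup_tgt n c (d :: l') (isChain_iff_pairwise.mp hc)
    rw [hrev] at hndT
    simp only [cons_append] at hndT
    have hlist : (d :: (l' ++ n ::
          (((List.range' (d+1) (n-1-d)).filter (fun u => u ∉ l')).reverse
            ++ descList (d-1) (c+1)))) ++ [c]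
        = d :: ((l' ++ n :: ((List.range' (d+1) (n-1-d)).filter (fun u => u ∉ l')).reverse)
            ++ descList (d-1) c) := by
      rw [descList_split (d-1) c (by omega)]
      simp
    have hnd2 : Nodup (d :: ((l' ++ n ::
          ((List.range' (d+1) (n-1-d)).filter (fun u => u ∉ l')).reverse)
            ++ descList (d-1) c)) := by
      have hp := (List.rotate_perm (c :: d :: (l' ++ n ::
          (((List.range' (d+1) (n-1-d)).filter (fun u => u ∉ l')).reverse
            ++ descList (d-1) (c+1)))) 1).symm.nodup hndT
      rw [rotate_cons_succ, rotate_zero, hlist] at hp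
      exact hp
    simp only [cons_append, zip_cons_cons, map_cons, flatten_cons, map_append, prod_append]
    rw [swapProd_descList' c d hcd, ih d hchain', descList_cons' d c hcd.le (by omega)]
    simp only [cons_append]
    rw [formPerm_mul_formPerm d (descList (d-1) c) _ hnd2, hrev]
    have h3 := List.formPerm_rotate_one (c :: d :: (l' ++ n ::
          (((List.range' (d+1) (n-1-d)).filter (fun u => u ∉ l')).reverse
            ++ descList (d-1) (c+1)))) hndT
    rw [rotate_cons_succ, rotate_zero, hlist] at h3
    exact h3

theorem mem_descList {a b i : ℕ} : i ∈ descList a b ↔ b ≤ i ∧ i < b + (a + 1 - b) := by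
  simp [descList, List.mem_range'_1]

theorem bounds_flatten (n : ℕ) (l : List ℕ) : ∀ (c : ℕ), Chain' (· < ·) (c :: (l ++ [n])) →
    ∀ i ∈ (((c :: l).zip (l ++ [n])).map fun p => descList (p.2 - 1) p.1).flatten,
      c ≤ i ∧ i + 1 ≤ n := by
  induction l with
  | nil =>
    intro c hc i hi
    have hcn : c < n := by
      rw [nil_append] at hc
      exact (isChain_cons_cons.mp hc).1
    simp only [nil_append, zip_cons_cons, zip_nil_left, map_cons, map_nil, flatten_cons,
      flatten_nil, append_nil] at hi
    rw [mem_descList] at hi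
    omega
  | cons d l' ih =>
    intro c hc i hi
    have hpair := isChain_iff_pairwise.mp hc
    rw [cons_append, pairwise_cons] at hpair
    have hcd : c < d := hpair.1 d mem_cons_self
    have hdn : d < n := by
      rw [pairwise_cons] at hpair
      exact hpair.2.1 n (mem_append.mpr (Or.inr (mem_singleton_self n)))
    have hchain' : Chain' (· < ·) (d :: (l' ++ [n])) := isChain_iff_pairwise.mpr hpair.2
    simp only [cons_append, zip_cons_cons, map_cons, flatten_cons, mem_append] at hi
    rcases hi with hi | hi
    · rw [mem_descList] at hi
      omega
    · have := ih d hchain' i hi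
      omega

end AuxStatement4

/-- the permutation of `δ_{d_1,…,d_m}` is the `n`-cycle
`1 ↦ d_1 ↦ ⋯ ↦ d_m ↦ n ↦ u_k ↦ ⋯ ↦ u_1 ↦ 1`. -/
theorem statement4 (n : ℕ) (hn : 3 ≤ n) (p : B n →* Equiv.Perm ℕ)
    (hp : ∀ i : ℕ, 1 ≤ i → i ≤ n - 1 → p (σb n i) = Equiv.swap i (i + 1))
    (l : List ℕ) (hl : List.Chain' (· < ·) (1 :: (l ++ [n]))) :
    p (deltaD n l) =
      ((1 :: l) ++ n :: ((List.range' 2 (n - 2)).filter fun u => u ∉ l).reverse).formPerm := by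
  have hb := bounds_flatten n l 1 hl
  have hmain := main_perm n l 1 hl
  rw [Nat.sub_sub, show (1:ℕ)+1 = 2 from rfl] at hmain
  show p (word n _) = _
  unfold word
  rw [map_list_prod, List.map_map]
  have hmap : ∀ W : List ℕ, (∀ i ∈ W, 1 ≤ i ∧ i + 1 ≤ n) →
      W.map (⇑p ∘ σb n) = W.map (fun i => Equiv.swap i (i+1)) := fun W hW =>
    List.map_congr_left fun i hi => hp i (hW i hi).1 (by have := (hW i hi).2; omega)
  rw [hmap _ hb, hmain]
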